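/- arXiv:nlin/0604040 — 9 statements merged into one kernel-verified Lean document; each statement's English description precedes it below -/
import Mathlib

section
/- Let p, q, r, γ : ℝ → ℝ be smooth functions with γ′′ − γ = (1/2)(q − r) − p′ on ℝ. Set M = [[p + γ′, −γ],[γ, −(p + γ′)]] (a smooth map ℝ → M₂(ℝ)). Then M′ + [M, A] = [−A, S] holds identically on ℝ, where S = [[p,q],[r,−p]]. Equivalently, the vector field ṗ = −(1/2)(r − q), q̇ = p, ṙ = −p is Hamiltonian with respect to both P₁ = [·, S] (with Hamiltonian differential −A) and P₂ = ∂ₓ + [·, A] (with Hamiltonian differential M). -/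
open Matrix

/-- The constant matrix `A = (1/2)·[[0,1],[1,0]]`. -/
noncomputable def A : Matrix (Fin 2) (Fin 2) ℝ := (1/2 : ℝ) • !![0, 1; 1, 0]

/-- Entrywise derivative of a matrix-valued function on `ℝ`. -/
noncomputable def mderiv (f : ℝ → Matrix (Fin 2) (Fin 2) ℝ) (x : ℝ) :
    Matrix (Fin 2) (Fin 2) ℝ :=
  Matrix.of fun i j => deriv (fun t => f t i j) x

/-! For a traceless `X = [[a, b], [c, -a]]` one has `[X, A] = [[(b - c)/2, a], [-a, (c - b)/2]]`.
Hence the off-diagonal entries of `M' + [M, A]` are `±p` (the `γ'` terms cancel), and its diagonal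
entries are `±(p' + γ'' - γ)`, which the equation for `γ` turns into the entries `±(q - r)/2`
of `[-A, S] = [S, A]`. -/

theorem mderiv_of_fin_two (a b c d : ℝ → ℝ) (x : ℝ) :
    mderiv (fun t => !![a t, b t; c t, d t]) x = !![deriv a x, deriv b x; deriv c x, deriv d x] := by
  ext i j
  fin_cases i <;> fin_cases j <;> rfl

theorem mul_A_sub_A_mul_of_fin_two (a b c d : ℝ) :
    !![a, b; c, d] * A - A * !![a, b; c, d] =
      !![(b - c) / 2, (a - d) / 2; (d - a) / 2, (c - b) / 2] := by
  ext i j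
  fin_cases i <;> fin_cases j <;> simp [A] <;> ring

theorem neg_mul_sub_mul_neg {R : Type*} [Ring R] (a x : R) :
    (-a) * x - x * (-a) = x * a - a * x := by
  rw [neg_mul, mul_neg, sub_neg_eq_add, neg_add_eq_sub]

theorem first_flow_biHamiltonian_general (p q r γ : ℝ → ℝ)
    (hp : ContDiff ℝ (⊤ : ℕ∞) p) (hγ : ContDiff ℝ (⊤ : ℕ∞) γ)
    (hγeq : ∀ x, deriv (deriv γ) x - γ x = (1/2) * (q x - r x) - deriv p x)
    (M : ℝ → Matrix (Fin 2) (Fin 2) ℝ)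
    (hM : M = fun x => !![p x + deriv γ x, -γ x; γ x, -(p x + deriv γ x)])
    (S : ℝ → Matrix (Fin 2) (Fin 2) ℝ)
    (hS : S = fun x => !![p x, q x; r x, -p x]) :
    ∀ x, (mderiv M x + (M x * A - A * M x) = (-A) * S x - S x * (-A)) ∧
      ((-A) * S x - S x * (-A) =
        !![-(1/2) * (r x - q x), p x; -(p x), -(-(1/2) * (r x - q x))]) := by
  intro x
  have hpx : DifferentiableAt ℝ p x := hp.differentiable (by simp) x
  have hγ'x : DifferentiableAt ℝ (deriv γ) x :=
    (contDiff_infty_iff_deriv.mp hγ).2.differentiable (by simp) x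
  have hP₁ : (-A) * S x - S x * (-A) =
      !![-(1/2) * (r x - q x), p x; -(p x), -(-(1/2) * (r x - q x))] := by
    rw [neg_mul_sub_mul_neg, hS, mul_A_sub_A_mul_of_fin_two]
    ext i j
    fin_cases i <;> fin_cases j <;> simp <;> ring
  refine ⟨?_, hP₁⟩
  rw [hP₁, hM, mderiv_of_fin_two, mul_A_sub_A_mul_of_fin_two, deriv.fun_neg, deriv.fun_neg,
    deriv_fun_add hpx hγ'x]
  ext i j
  fin_cases i <;> fin_cases j <;> simp <;> linarith [hγeq x]

theorem first_flow_biHamiltonian (p q r γ : ℝ → ℝ)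
    (hp : ContDiff ℝ (⊤ : ℕ∞) p) (hq : ContDiff ℝ (⊤ : ℕ∞) q)
    (hr : ContDiff ℝ (⊤ : ℕ∞) r) (hγ : ContDiff ℝ (⊤ : ℕ∞) γ)
    (hγeq : ∀ x, deriv (deriv γ) x - γ x = (1/2) * (q x - r x) - deriv p x)
    (M : ℝ → Matrix (Fin 2) (Fin 2) ℝ)
    (hM : M = fun x => !![p x + deriv γ x, -γ x; γ x, -(p x + deriv γ x)])
    (S : ℝ → Matrix (Fin 2) (Fin 2) ℝ)
    (hS : S = fun x => !![p x, q x; r x, -p x]) :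
    ∀ x, (mderiv M x + (M x * A - A * M x) = (-A) * S x - S x * (-A)) ∧
      ((-A) * S x - S x * (-A) =
        !![-(1/2) * (r x - q x), p x; -(p x), -(-(1/2) * (r x - q x))]) :=
  first_flow_biHamiltonian_general p q r γ hp hγ hγeq M hM S hS
end

section
/- Let p, q, r, γ : ℝ × ℝ → ℝ be smooth functions of (t,x), all 1-periodic in x, satisfying γ_xx − γ = (1/2)(q − r) − p_x for all (t,x). Then for every t: ∫₀¹ [2·p_t·(γ_x + p) − γ·r_t + γ·q_t] dx = (d/dt) ∫₀¹ (p² − γ² − γ_x²) dx. -/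
open MeasureTheory

/-- Partial derivative in the first variable `t` of a function of `(t,x)`. -/
noncomputable def Dt (f : ℝ × ℝ → ℝ) : ℝ × ℝ → ℝ :=
  fun z => deriv (fun s => f (s, z.2)) z.1

/-- Partial derivative in the second variable `x` of a function of `(t,x)`. -/
noncomputable def Dx (f : ℝ × ℝ → ℝ) : ℝ × ℝ → ℝ :=
  fun z => deriv (fun y => f (z.1, y)) z.2

/-- 1-periodicity in the second variable `x`. -/
def PeriodicX (f : ℝ × ℝ → ℝ) : Prop := ∀ t x : ℝ, f (t, x + 1) = f (t, x)

/-!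
Differentiating the constraint in time gives `q_t - r_t = 2 (γ_xxt - γ_t + p_xt)`. Together with
the product rule and the symmetry of mixed partials, this turns the integrand of the pairing into
`∂ₜ (p² - γ² - γ_x²) + ∂ₓ (2 γ (p_t + γ_xt))`. The flux term integrates to zero over a period, and
the remaining term is the time derivative of `H₂` by differentiation under the integral sign.
-/

open Set Filter
open scoped ContDiff

section PartialDerivatives

variable {f : ℝ × ℝ → ℝ}

theorem hasDerivAt_Dt {t x : ℝ} (hf : DifferentiableAt ℝ f (t, x)) :
    HasDerivAt (fun s => f (s, x)) (Dt f (t, x)) t :=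
  (hf.comp t (differentiableAt_id.prodMk (differentiableAt_const x))).hasDerivAt

theorem hasDerivAt_Dx {t x : ℝ} (hf : DifferentiableAt ℝ f (t, x)) :
    HasDerivAt (fun y => f (t, y)) (Dx f (t, x)) x :=
  (hf.comp x ((differentiableAt_const t).prodMk differentiableAt_id)).hasDerivAt

theorem Dt_eq_fderiv (hf : Differentiable ℝ f) : Dt f = fun z => fderiv ℝ f z (1, 0) := by
  funext ⟨t, x⟩
  exact (hasDerivAt_Dt (hf _)).unique
    ((hf _).hasFDerivAt.comp_hasDerivAt t ((hasDerivAt_id t).prodMk (hasDerivAt_const t x)))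

theorem Dx_eq_fderiv (hf : Differentiable ℝ f) : Dx f = fun z => fderiv ℝ f z (0, 1) := by
  funext ⟨t, x⟩
  exact (hasDerivAt_Dx (hf _)).unique
    ((hf _).hasFDerivAt.comp_hasDerivAt x ((hasDerivAt_const x t).prodMk (hasDerivAt_id x)))

theorem ContDiff.Dt (hf : ContDiff ℝ ∞ f) : ContDiff ℝ ∞ (Dt f) := by
  obtain ⟨hdiff, hf'⟩ := contDiff_infty_iff_fderiv.1 hf
  rw [Dt_eq_fderiv hdiff]
  exact hf'.clm_apply contDiff_const

theorem ContDiff.Dx (hf : ContDiff ℝ ∞ f) : ContDiff ℝ ∞ (Dx f) := by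
  obtain ⟨hdiff, hf'⟩ := contDiff_infty_iff_fderiv.1 hf
  rw [Dx_eq_fderiv hdiff]
  exact hf'.clm_apply contDiff_const

theorem Dt_Dx_comm (hf : ContDiff ℝ 2 f) : Dt (Dx f) = Dx (Dt f) := by
  have hdiff : Differentiable ℝ f := hf.differentiable (by norm_num)
  have hdiff' : Differentiable ℝ (fderiv ℝ f) :=
    (hf.fderiv_right (m := 1) (by norm_num)).differentiable one_ne_zero
  have hDx : Differentiable ℝ fun z => fderiv ℝ f z (0, 1) :=
    hdiff'.clm_apply (differentiable_const _)
  have hDt : Differentiable ℝ fun z => fderiv ℝ f z (1, 0) :=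
    hdiff'.clm_apply (differentiable_const _)
  rw [Dx_eq_fderiv hdiff, Dt_eq_fderiv hdiff, Dt_eq_fderiv hDx, Dx_eq_fderiv hDt]
  funext z
  rw [fderiv_clm_apply (hdiff' z) (differentiableAt_const _),
    fderiv_clm_apply (hdiff' z) (differentiableAt_const _)]
  simpa using ((hf.contDiffAt (x := z)).isSymmSndFDerivAt (by simp) (0, 1) (1, 0)).symm

end PartialDerivatives

section Integrals

variable {f : ℝ × ℝ → ℝ}

theorem integral_Dx_eq_sub (hf : ContDiff ℝ 1 f) (t a b : ℝ) :
    ∫ x in a..b, Dx f (t, x) = f (t, b) - f (t, a) :=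
  intervalIntegral.integral_deriv_of_contDiffOn_uIcc
    (hf.comp (contDiff_const.prodMk contDiff_id)).contDiffOn

theorem PeriodicX.integral_Dx_eq_zero (hper : PeriodicX f) (hf : ContDiff ℝ 1 f) (t : ℝ) :
    ∫ x in (0:ℝ)..1, Dx f (t, x) = 0 := by
  rw [integral_Dx_eq_sub hf, sub_eq_zero]
  simpa using hper t 0

theorem hasDerivAt_integral_Dt (hf : ContDiff ℝ 1 f) (a b t : ℝ) :
    HasDerivAt (fun s => ∫ x in a..b, f (s, x)) (∫ x in a..b, Dt f (t, x)) t := by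
  have hdiff : Differentiable ℝ f := hf.differentiable one_ne_zero
  have hDt : Continuous (Dt f) := by
    rw [Dt_eq_fderiv hdiff]
    exact (hf.continuous_fderiv one_ne_zero).clm_apply continuous_const
  obtain ⟨C, hC⟩ : ∃ C, ∀ z ∈ Icc (t - 1) (t + 1) ×ˢ uIcc a b, ‖Dt f z‖ ≤ C :=
    (isCompact_Icc.prod isCompact_uIcc).exists_bound_of_continuousOn hDt.continuousOn
  refine (intervalIntegral.hasDerivAt_integral_of_dominated_loc_of_deriv_le
    (F' := fun s x => Dt f (s, x)) (bound := fun _ => C) (Metric.ball_mem_nhds t one_pos)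
    (Eventually.of_forall fun s => hf.continuous.along_snd.aestronglyMeasurable)
    (hf.continuous.along_snd.intervalIntegrable a b) hDt.along_snd.aestronglyMeasurable
    (Eventually.of_forall fun x hx s hs => hC _ ⟨?_, uIoc_subset_uIcc hx⟩)
    intervalIntegrable_const
    (Eventually.of_forall fun x _ s _ => hasDerivAt_Dt (hdiff _))).2
  rw [Metric.mem_ball, Real.dist_eq, abs_lt] at hs
  constructor <;> linarith

end Integrals

theorem PeriodicX.Dt {f : ℝ × ℝ → ℝ} (h : PeriodicX f) : PeriodicX (Dt f) := fun t x =>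
  congrArg (deriv · t) (funext fun s => h s x)

theorem PeriodicX.Dx {f : ℝ × ℝ → ℝ} (h : PeriodicX f) : PeriodicX (Dx f) := fun t x => by
  rw [_root_.Dx, _root_.Dx, ← deriv_comp_add_const]
  exact congrArg (deriv · x) (funext fun y => h t y)

section CamassaHolm

variable {p q r γ : ℝ × ℝ → ℝ}

noncomputable def h2Density (p γ : ℝ × ℝ → ℝ) : ℝ × ℝ → ℝ :=
  fun z => p z ^ 2 - γ z ^ 2 - Dx γ z ^ 2

noncomputable def h2Flux (p γ : ℝ × ℝ → ℝ) : ℝ × ℝ → ℝ :=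
  fun z => 2 * γ z * (Dt p z + Dx (Dt γ) z)

theorem ContDiff.h2Density (hp : ContDiff ℝ ∞ p) (hγ : ContDiff ℝ ∞ γ) :
    ContDiff ℝ ∞ (h2Density p γ) :=
  ((hp.pow 2).sub (hγ.pow 2)).sub (hγ.Dx.pow 2)

theorem ContDiff.h2Flux (hp : ContDiff ℝ ∞ p) (hγ : ContDiff ℝ ∞ γ) :
    ContDiff ℝ ∞ (h2Flux p γ) :=
  (contDiff_const.mul hγ).mul (hp.Dt.add hγ.Dt.Dx)

theorem PeriodicX.h2Flux (hp : PeriodicX p) (hγ : PeriodicX γ) : PeriodicX (h2Flux p γ) :=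
  fun t x => by simp only [_root_.h2Flux, hγ t x, hp.Dt t x, hγ.Dt.Dx t x]

theorem Dt_h2Density (hp : ContDiff ℝ ∞ p) (hγ : ContDiff ℝ ∞ γ) (t x : ℝ) :
    Dt (h2Density p γ) (t, x) = 2 * p (t, x) * Dt p (t, x) - 2 * γ (t, x) * Dt γ (t, x)
      - 2 * Dx γ (t, x) * Dx (Dt γ) (t, x) := by
  have hderiv := (((hasDerivAt_Dt (hp.differentiable (by simp) (t, x))).pow 2).sub
    ((hasDerivAt_Dt (hγ.differentiable (by simp) (t, x))).pow 2)).sub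
    ((hasDerivAt_Dt (hγ.Dx.differentiable (by simp) (t, x))).pow 2)
  rw [← Dt_Dx_comm (contDiff_infty.1 hγ 2)]
  refine hderiv.deriv.trans ?_
  push_cast
  ring

theorem Dx_h2Flux (hp : ContDiff ℝ ∞ p) (hγ : ContDiff ℝ ∞ γ) (t x : ℝ) :
    Dx (h2Flux p γ) (t, x) = 2 * Dx γ (t, x) * (Dt p (t, x) + Dx (Dt γ) (t, x))
      + 2 * γ (t, x) * (Dx (Dt p) (t, x) + Dx (Dx (Dt γ)) (t, x)) :=
  (((hasDerivAt_Dx (hγ.differentiable (by simp) (t, x))).const_mul 2).mul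
    ((hasDerivAt_Dx (hp.Dt.differentiable (by simp) (t, x))).add
      (hasDerivAt_Dx (hγ.Dt.Dx.differentiable (by simp) (t, x))))).deriv

theorem Dt_constraint (hp : ContDiff ℝ ∞ p) (hq : ContDiff ℝ ∞ q) (hr : ContDiff ℝ ∞ r)
    (hγ : ContDiff ℝ ∞ γ)
    (hγeq : ∀ t x : ℝ,
      Dx (Dx γ) (t, x) - γ (t, x) = (1/2) * (q (t, x) - r (t, x)) - Dx p (t, x))
    (t x : ℝ) :
    Dt q (t, x) - Dt r (t, x)
      = 2 * (Dx (Dx (Dt γ)) (t, x) - Dt γ (t, x) + Dx (Dt p) (t, x)) := by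
  have hlhs : HasDerivAt (fun s => (1/2) * (q (s, x) - r (s, x)) - Dx p (s, x))
      (Dt (Dx (Dx γ)) (t, x) - Dt γ (t, x)) t := by
    simp only [← hγeq]
    exact (hasDerivAt_Dt (hγ.Dx.Dx.differentiable (by simp) (t, x))).sub
      (hasDerivAt_Dt (hγ.differentiable (by simp) (t, x)))
  have hrhs := (((hasDerivAt_Dt (hq.differentiable (by simp) (t, x))).sub
    (hasDerivAt_Dt (hr.differentiable (by simp) (t, x)))).const_mul (1/2)).sub
    (hasDerivAt_Dt (hp.Dx.differentiable (by simp) (t, x)))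
  have h := hlhs.unique hrhs
  rw [Dt_Dx_comm (contDiff_infty.1 hγ.Dx 2), Dt_Dx_comm (contDiff_infty.1 hγ 2),
    Dt_Dx_comm (contDiff_infty.1 hp 2)] at h
  linarith

theorem pairing_integrand_eq (hp : ContDiff ℝ ∞ p) (hq : ContDiff ℝ ∞ q) (hr : ContDiff ℝ ∞ r)
    (hγ : ContDiff ℝ ∞ γ)
    (hγeq : ∀ t x : ℝ,
      Dx (Dx γ) (t, x) - γ (t, x) = (1/2) * (q (t, x) - r (t, x)) - Dx p (t, x))
    (t x : ℝ) :
    2 * Dt p (t, x) * (Dx γ (t, x) + p (t, x)) - γ (t, x) * Dt r (t, x)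
        + γ (t, x) * Dt q (t, x)
      = Dt (h2Density p γ) (t, x) + Dx (h2Flux p γ) (t, x) := by
  rw [Dt_h2Density hp hγ, Dx_h2Flux hp hγ]
  linear_combination γ (t, x) * Dt_constraint hp hq hr hγ hγeq t x

end CamassaHolm

theorem pairing_dH2_eq_time_deriv_H2_general (p q r γ : ℝ × ℝ → ℝ)
    (hp : ContDiff ℝ (⊤ : ℕ∞) p) (hq : ContDiff ℝ (⊤ : ℕ∞) q)
    (hr : ContDiff ℝ (⊤ : ℕ∞) r) (hγ : ContDiff ℝ (⊤ : ℕ∞) γ)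
    (hpper : PeriodicX p) (hγper : PeriodicX γ)
    (hγeq : ∀ t x : ℝ,
      Dx (Dx γ) (t, x) - γ (t, x) = (1/2) * (q (t, x) - r (t, x)) - Dx p (t, x)) :
    ∀ t : ℝ,
      (∫ x in (0:ℝ)..1,
        (2 * Dt p (t, x) * (Dx γ (t, x) + p (t, x))
          - γ (t, x) * Dt r (t, x) + γ (t, x) * Dt q (t, x))) =
      deriv (fun s => ∫ x in (0:ℝ)..1,
        (p (s, x) ^ 2 - γ (s, x) ^ 2 - (Dx γ (s, x)) ^ 2)) t := by
  intro t
  calc _ = ∫ x in (0:ℝ)..1, Dt (h2Density p γ) (t, x) + Dx (h2Flux p γ) (t, x) :=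
        intervalIntegral.integral_congr fun x _ => pairing_integrand_eq hp hq hr hγ hγeq t x
    _ = ∫ x in (0:ℝ)..1, Dt (h2Density p γ) (t, x) := by
        rw [intervalIntegral.integral_add
            ((hp.h2Density hγ).Dt.continuous.along_snd.intervalIntegrable 0 1)
            ((hp.h2Flux hγ).Dx.continuous.along_snd.intervalIntegrable 0 1),
          (hpper.h2Flux hγper).integral_Dx_eq_zero ((hp.h2Flux hγ).of_le (by simp)), add_zero]
    _ = _ := (hasDerivAt_integral_Dt ((hp.h2Density hγ).of_le (by simp)) 0 1 t).deriv.symm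

theorem pairing_dH2_eq_time_deriv_H2 (p q r γ : ℝ × ℝ → ℝ)
    (hp : ContDiff ℝ (⊤ : ℕ∞) p) (hq : ContDiff ℝ (⊤ : ℕ∞) q)
    (hr : ContDiff ℝ (⊤ : ℕ∞) r) (hγ : ContDiff ℝ (⊤ : ℕ∞) γ)
    (hpper : PeriodicX p) (hqper : PeriodicX q)
    (hrper : PeriodicX r) (hγper : PeriodicX γ)
    (hγeq : ∀ t x : ℝ,
      Dx (Dx γ) (t, x) - γ (t, x) = (1/2) * (q (t, x) - r (t, x)) - Dx p (t, x)) :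
    ∀ t : ℝ,
      (∫ x in (0:ℝ)..1,
        (2 * Dt p (t, x) * (Dx γ (t, x) + p (t, x))
          - γ (t, x) * Dt r (t, x) + γ (t, x) * Dt q (t, x))) =
      deriv (fun s => ∫ x in (0:ℝ)..1,
        (p (s, x) ^ 2 - γ (s, x) ^ 2 - (Dx γ (s, x)) ^ 2)) t :=
  pairing_dH2_eq_time_deriv_H2_general p q r γ hp hq hr hγ hpper hγper hγeq
end

section
/- Let λ be a nonzero real number and Λ a constant real 2×2 matrix. Let S, K : ℝ × ℝ → M₂(ℝ) be smooth functions of (t,x), 1-periodic in x, with K(t,x) invertible for every (t,x). Set V := K Λ K⁻¹ and M := K⁻¹(S − λA)K + λ·K⁻¹·∂ₓK, and assume −λ·∂ₓV + [V, S − λA] = 0 for all (t,x). Then for every t: (d/dt) ∫₀¹ tr(M(t,x)·Λ) dx = ∫₀¹ tr(∂ₜS(t,x)·V(t,x)) dx. -/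
open Matrix MeasureTheory

/-- Entrywise partial derivative in the second variable `x` of a
matrix-valued function of `(t,x)`. -/
noncomputable def DxM (f : ℝ × ℝ → Matrix (Fin 2) (Fin 2) ℝ) :
    ℝ × ℝ → Matrix (Fin 2) (Fin 2) ℝ :=
  fun z => Matrix.of fun i j => deriv (fun y => f (z.1, y) i j) z.2

/-- Entrywise partial derivative in the first variable `t` of a
matrix-valued function of `(t,x)`. -/
noncomputable def DtM (f : ℝ × ℝ → Matrix (Fin 2) (Fin 2) ℝ) :
    ℝ × ℝ → Matrix (Fin 2) (Fin 2) ℝ :=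
  fun z => Matrix.of fun i j => deriv (fun s => f (s, z.2) i j) z.1

/-- A matrix-valued function of `(t,x)` is smooth if all its entries are `C^∞`. -/
def MSmooth2 (f : ℝ × ℝ → Matrix (Fin 2) (Fin 2) ℝ) : Prop :=
  ∀ i j, ContDiff ℝ (⊤ : ℕ∞) fun z : ℝ × ℝ => f z i j

/-- 1-periodicity in the second variable `x`. -/
def MPeriodicX (f : ℝ × ℝ → Matrix (Fin 2) (Fin 2) ℝ) : Prop :=
  ∀ t x : ℝ, f (t, x + 1) = f (t, x)

/-!
The Lax equation `-λ Vₓ + [V, U] = 0`, `U = S - λA`, conjugated by `K`, says exactly that `Λ`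
commutes with `M = K⁻¹ U K + λ K⁻¹ Kₓ`. With `X = K⁻¹ Kₜ`, differentiating the gauge
transform gives `Mₜ = K⁻¹ Uₜ K + [M, X] + λ Xₓ`. Against `Λ` the commutator has zero trace,
so `∂ₜ tr(MΛ) = tr(Sₜ V) + λ ∂ₓ tr(XΛ)`; the last term integrates to zero over a period of
the `x`-periodic `K`, and differentiating under the integral sign gives the claim.
-/

open scoped ContDiff

section Partial

variable {φ : ℝ × ℝ → ℝ}

theorem DifferentiableAt.hasDerivAt_partial_fst {t x : ℝ} (hφ : DifferentiableAt ℝ φ (t, x)) :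
    HasDerivAt (fun s => φ (s, x)) (fderiv ℝ φ (t, x) (1, 0)) t :=
  hφ.hasFDerivAt.comp_hasDerivAt t ((hasDerivAt_id t).prodMk (hasDerivAt_const t x))

theorem DifferentiableAt.hasDerivAt_partial_snd {t x : ℝ} (hφ : DifferentiableAt ℝ φ (t, x)) :
    HasDerivAt (fun y => φ (t, y)) (fderiv ℝ φ (t, x) (0, 1)) x :=
  hφ.hasFDerivAt.comp_hasDerivAt x ((hasDerivAt_const x t).prodMk (hasDerivAt_id x))

theorem ContDiff.contDiff_partial_fst (hφ : ContDiff ℝ ∞ φ) :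
    ContDiff ℝ ∞ fun z : ℝ × ℝ => deriv (fun s => φ (s, z.2)) z.1 := by
  have hdiff : Differentiable ℝ φ := hφ.differentiable (by simp)
  simp_rw [fun z : ℝ × ℝ => (hdiff (z.1, z.2)).hasDerivAt_partial_fst.deriv]
  exact (hφ.fderiv_right le_rfl).clm_apply contDiff_const

theorem ContDiff.contDiff_partial_snd (hφ : ContDiff ℝ ∞ φ) :
    ContDiff ℝ ∞ fun z : ℝ × ℝ => deriv (fun y => φ (z.1, y)) z.2 := by
  have hdiff : Differentiable ℝ φ := hφ.differentiable (by simp)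
  simp_rw [fun z : ℝ × ℝ => (hdiff (z.1, z.2)).hasDerivAt_partial_snd.deriv]
  exact (hφ.fderiv_right le_rfl).clm_apply contDiff_const

theorem ContDiff.partial_fst_partial_snd_comm (hφ : ContDiff ℝ ∞ φ) (t x : ℝ) :
    deriv (fun s => deriv (fun y => φ (s, y)) x) t
      = deriv (fun y => deriv (fun s => φ (s, y)) t) x := by
  have hdiff : Differentiable ℝ φ := hφ.differentiable (by simp)
  have hdiff' : Differentiable ℝ (fderiv ℝ φ) :=
    (hφ.fderiv_right (m := ∞) le_rfl).differentiable (by simp)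
  have hpartial (v : ℝ × ℝ) : Differentiable ℝ fun w => fderiv ℝ φ w v :=
    hdiff'.clm_apply (differentiable_const v)
  simp_rw [fun s => (hdiff (s, x)).hasDerivAt_partial_snd.deriv,
    fun y => (hdiff (t, y)).hasDerivAt_partial_fst.deriv]
  rw [((hpartial _) (t, x)).hasDerivAt_partial_fst.deriv,
    ((hpartial _) (t, x)).hasDerivAt_partial_snd.deriv,
    fderiv_clm_apply (u := fun _ => ((0 : ℝ), (1 : ℝ))) (hdiff' _) (differentiableAt_const _),
    fderiv_clm_apply (u := fun _ => ((1 : ℝ), (0 : ℝ))) (hdiff' _) (differentiableAt_const _)]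
  simp only [fderiv_fun_const, Pi.zero_apply, ContinuousLinearMap.comp_zero, zero_add,
    ContinuousLinearMap.flip_apply]
  exact ((hφ.contDiffAt).isSymmSndFDerivAt (by simp [ENat.LEInfty.out])) _ _

end Partial

section MatrixDeriv

variable {𝕜 : Type*} [NontriviallyNormedField 𝕜] {l m n : Type*}

def HasMatrixDerivAt (g : 𝕜 → Matrix m n 𝕜) (g' : Matrix m n 𝕜) (t : 𝕜) : Prop :=
  ∀ i j, HasDerivAt (fun s => g s i j) (g' i j) t

theorem hasMatrixDerivAt_const (C : Matrix m n 𝕜) (t : 𝕜) :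
    HasMatrixDerivAt (fun _ => C) 0 t :=
  fun i j => hasDerivAt_const t (C i j)

namespace HasMatrixDerivAt

variable {g h : 𝕜 → Matrix m n 𝕜} {g' g'' h' : Matrix m n 𝕜} {t : 𝕜}

theorem unique (hg' : HasMatrixDerivAt g g' t) (hg'' : HasMatrixDerivAt g g'' t) : g' = g'' :=
  Matrix.ext fun i j => (hg' i j).unique (hg'' i j)

theorem add (hg : HasMatrixDerivAt g g' t) (hh : HasMatrixDerivAt h h' t) :
    HasMatrixDerivAt (fun s => g s + h s) (g' + h') t :=
  fun i j => (hg i j).add (hh i j)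

theorem const_smul (c : 𝕜) (hg : HasMatrixDerivAt g g' t) :
    HasMatrixDerivAt (fun s => c • g s) (c • g') t :=
  fun i j => (hg i j).const_mul c

theorem mul [Fintype m] {g : 𝕜 → Matrix l m 𝕜} {h : 𝕜 → Matrix m n 𝕜} {g' : Matrix l m 𝕜}
    {h' : Matrix m n 𝕜} (hg : HasMatrixDerivAt g g' t) (hh : HasMatrixDerivAt h h' t) :
    HasMatrixDerivAt (fun s => g s * h s) (g' * h t + g t * h') t := by
  intro i j
  simp only [mul_apply, Matrix.add_apply, ← Finset.sum_add_distrib]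
  exact HasDerivAt.fun_sum fun k _ => (hg i k).fun_mul (hh k j)

theorem mul_const [Fintype m] {g : 𝕜 → Matrix l m 𝕜} {g' : Matrix l m 𝕜} (C : Matrix m n 𝕜)
    (hg : HasMatrixDerivAt g g' t) : HasMatrixDerivAt (fun s => g s * C) (g' * C) t := by
  simpa using hg.mul (hasMatrixDerivAt_const C t)

theorem trace [Fintype n] {g : 𝕜 → Matrix n n 𝕜} {g' : Matrix n n 𝕜}
    (hg : HasMatrixDerivAt g g' t) : HasDerivAt (fun s => (g s).trace) g'.trace t :=
  HasDerivAt.fun_sum fun i _ => hg i i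

theorem nonsing_inv [Fintype n] [DecidableEq n] {g : 𝕜 → Matrix n n 𝕜} {g' h' : Matrix n n 𝕜}
    (hg : HasMatrixDerivAt g g' t) (hinv : HasMatrixDerivAt (fun s => (g s)⁻¹) h' t)
    (hunit : ∀ s, IsUnit (g s)) :
    HasMatrixDerivAt (fun s => (g s)⁻¹) (-((g t)⁻¹ * g' * (g t)⁻¹)) t := by
  have hprod : HasMatrixDerivAt (fun s => g s * (g s)⁻¹) (g' * (g t)⁻¹ + g t * h') t :=
    hg.mul hinv
  simp_rw [mul_nonsing_inv _ ((isUnit_iff_isUnit_det _).mp (hunit _))] at hprod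
  have hzero : g' * (g t)⁻¹ + g t * h' = 0 := hprod.unique (hasMatrixDerivAt_const 1 t)
  have hdet : IsUnit (g t).det := (isUnit_iff_isUnit_det _).mp (hunit t)
  convert hinv using 1
  calc -((g t)⁻¹ * g' * (g t)⁻¹) = (g t)⁻¹ * (g t * h') := by
        rw [← neg_eq_of_add_eq_zero_right hzero, mul_neg, mul_assoc]
    _ = h' := by rw [← mul_assoc, nonsing_inv_mul _ hdet, one_mul]

end HasMatrixDerivAt

end MatrixDeriv

section GaugeAlgebra

variable {R n : Type*} [CommRing R] [Fintype n]

theorem trace_commutator_mul_eq_zero {Λ M X : Matrix n n R} (h : Commute Λ M) :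
    ((M * X - X * M) * Λ).trace = 0 := by
  calc ((M * X - X * M) * Λ).trace = (M * (X * Λ)).trace - (X * (M * Λ)).trace := by
        rw [sub_mul, trace_sub, mul_assoc, mul_assoc]
    _ = 0 := by rw [trace_mul_comm, ← h.eq, mul_assoc, sub_self]

/-- `hlax` is the Lax equation `-λ Vₓ + [V, U] = 0` for `V = K Λ N`, with `Vₓ` expanded by
the product rule and `Nₓ = -N Kₓ N`. -/
theorem commute_of_lax [DecidableEq n] (lam : R) {K N Kx U Λ : Matrix n n R} (hNK : N * K = 1)
    (hlax : (-lam) • (Kx * Λ * N + K * Λ * -(N * Kx * N)) + (K * Λ * N * U - U * (K * Λ * N)) = 0) :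
    Commute Λ (N * U * K + lam • (N * Kx)) := by
  have hNK' (X : Matrix n n R) : N * (K * X) = X := by rw [← mul_assoc, hNK, one_mul]
  have hconj := congrArg (N * · * K) hlax
  simp only [mul_add, add_mul, mul_sub, sub_mul, mul_neg, neg_mul, mul_smul_comm, smul_mul_assoc,
    mul_assoc, hNK, hNK', mul_one, mul_zero, zero_mul] at hconj
  rw [Commute, SemiconjBy, ← sub_eq_zero, ← hconj]
  simp only [mul_add, add_mul, mul_smul_comm, smul_mul_assoc, mul_assoc]
  module

/-- The left side is the product-rule expansion of `∂ₜ tr(MΛ)` for `M = N U K + λ N Kₓ`,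
`N = K⁻¹` (so `Nₜ = -N Kₜ N`); the last trace on the right is `∂ₓ tr(N Kₜ Λ)`, where
`Ktx` is the mixed partial of `K`. -/
theorem trace_gauge_deriv [DecidableEq n] (lam : R) {K N Kt Kx Ktx U Ut Λ : Matrix n n R}
    (hKN : K * N = 1) (hcomm : Commute Λ (N * U * K + lam • (N * Kx))) :
    ((((-(N * Kt * N)) * U + N * Ut) * K + N * U * Kt + lam • (-(N * Kt * N) * Kx + N * Ktx))
        * Λ).trace
      = (Ut * (K * Λ * N)).trace + lam * ((-(N * Kx * N) * Kt + N * Ktx) * Λ).trace := by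
  have hKN' (X : Matrix n n R) : K * (N * X) = X := by rw [← mul_assoc, hKN, one_mul]
  set M := N * U * K + lam • (N * Kx)
  have hgauge : ((-(N * Kt * N)) * U + N * Ut) * K + N * U * Kt
        + lam • (-(N * Kt * N) * Kx + N * Ktx)
      = N * Ut * K + (M * (N * Kt) - N * Kt * M) + lam • (-(N * Kx * N) * Kt + N * Ktx) := by
    simp only [M, mul_add, add_mul, neg_mul, mul_smul_comm, smul_mul_assoc, mul_assoc, hKN']
    module
  rw [hgauge, add_mul, add_mul, trace_add, trace_add, trace_commutator_mul_eq_zero hcomm,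
    smul_mul_assoc, trace_smul, smul_eq_mul, mul_assoc, mul_assoc, trace_mul_comm N, add_zero]
  simp only [mul_assoc]

end GaugeAlgebra

namespace MSmooth2

variable {f g : ℝ × ℝ → Matrix (Fin 2) (Fin 2) ℝ}

theorem const (C : Matrix (Fin 2) (Fin 2) ℝ) : MSmooth2 fun _ => C :=
  fun _ _ => contDiff_const

theorem add (hf : MSmooth2 f) (hg : MSmooth2 g) : MSmooth2 fun z => f z + g z :=
  fun i j => (hf i j).add (hg i j)

theorem sub (hf : MSmooth2 f) (hg : MSmooth2 g) : MSmooth2 fun z => f z - g z :=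
  fun i j => (hf i j).sub (hg i j)

theorem const_smul (c : ℝ) (hf : MSmooth2 f) : MSmooth2 fun z => c • f z :=
  fun i j => (hf i j).const_smul c

theorem mul (hf : MSmooth2 f) (hg : MSmooth2 g) : MSmooth2 fun z => f z * g z := by
  intro i j
  simp only [mul_apply]
  exact ContDiff.sum fun k _ => (hf i k).mul (hg k j)

theorem nonsing_inv (hf : MSmooth2 f) (hunit : ∀ z, IsUnit (f z)) :
    MSmooth2 fun z => (f z)⁻¹ := by
  have hdet : ContDiff ℝ ∞ fun z => (f z).det := by
    simp only [det_fin_two]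
    exact ((hf 0 0).mul (hf 1 1)).sub ((hf 0 1).mul (hf 1 0))
  have hdet_inv : ContDiff ℝ ∞ fun z => ((f z).det)⁻¹ :=
    hdet.inv fun z => ((isUnit_iff_isUnit_det _).mp (hunit z)).ne_zero
  intro i j
  simp only [inv_def, Ring.inverse_eq_inv', Matrix.smul_apply, smul_eq_mul, adjugate_fin_two]
  refine hdet_inv.mul ?_
  fin_cases i <;> fin_cases j
  · exact hf 1 1
  · exact (hf 0 1).neg
  · exact (hf 1 0).neg
  · exact hf 0 0

theorem dtM (hf : MSmooth2 f) : MSmooth2 (DtM f) :=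
  fun i j => (hf i j).contDiff_partial_fst

theorem dxM (hf : MSmooth2 f) : MSmooth2 (DxM f) :=
  fun i j => (hf i j).contDiff_partial_snd

theorem hasMatrixDerivAt_dtM (hf : MSmooth2 f) (t x : ℝ) :
    HasMatrixDerivAt (fun s => f (s, x)) (DtM f (t, x)) t :=
  fun i j => (((hf i j).differentiable (by simp) _).comp t
    (differentiableAt_id.prodMk (differentiableAt_const x))).hasDerivAt

theorem hasMatrixDerivAt_dxM (hf : MSmooth2 f) (t x : ℝ) :
    HasMatrixDerivAt (fun y => f (t, y)) (DxM f (t, x)) x :=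
  fun i j => (((hf i j).differentiable (by simp) _).comp x
    ((differentiableAt_const t).prodMk differentiableAt_id)).hasDerivAt

theorem continuous_trace (hf : MSmooth2 f) : Continuous fun z => (f z).trace := by
  simp only [trace_fin_two]
  exact ((hf 0 0).add (hf 1 1)).continuous

theorem dxM_dtM (hf : MSmooth2 f) : DxM (DtM f) = DtM (DxM f) := by
  funext z
  ext i j
  exact ((hf i j).partial_fst_partial_snd_comm z.1 z.2).symm

theorem hasMatrixDerivAt_dtM_inv (hf : MSmooth2 f) (hunit : ∀ z, IsUnit (f z)) (t x : ℝ) :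
    HasMatrixDerivAt (fun s => (f (s, x))⁻¹)
      (-((f (t, x))⁻¹ * DtM f (t, x) * (f (t, x))⁻¹)) t :=
  (hf.hasMatrixDerivAt_dtM t x).nonsing_inv ((hf.nonsing_inv hunit).hasMatrixDerivAt_dtM t x)
    fun s => hunit (s, x)

theorem hasMatrixDerivAt_dxM_inv (hf : MSmooth2 f) (hunit : ∀ z, IsUnit (f z)) (t x : ℝ) :
    HasMatrixDerivAt (fun y => (f (t, y))⁻¹)
      (-((f (t, x))⁻¹ * DxM f (t, x) * (f (t, x))⁻¹)) x :=
  (hf.hasMatrixDerivAt_dxM t x).nonsing_inv ((hf.nonsing_inv hunit).hasMatrixDerivAt_dxM t x)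
    fun y => hunit (t, y)

end MSmooth2

theorem DtM_sub_const (f : ℝ × ℝ → Matrix (Fin 2) (Fin 2) ℝ) (C : Matrix (Fin 2) (Fin 2) ℝ) :
    DtM (fun z => f z - C) = DtM f := by
  funext z
  ext i j
  simp only [DtM, of_apply, Matrix.sub_apply, deriv_sub_const]

theorem MPeriodicX.dtM {f : ℝ × ℝ → Matrix (Fin 2) (Fin 2) ℝ} (hf : MPeriodicX f) :
    MPeriodicX (DtM f) := by
  intro t x
  simp only [DtM, fun s => hf s x]

theorem hasDerivAt_intervalIntegral_of_continuous_partial {E : Type*} [NormedAddCommGroup E]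
    [NormedSpace ℝ E] {F F' : ℝ × ℝ → E}
    (hderiv : ∀ t x, HasDerivAt (fun s => F (s, x)) (F' (t, x)) t)
    (hF : Continuous F) (hF' : Continuous F') (a b t : ℝ) :
    HasDerivAt (fun s => ∫ x in a..b, F (s, x)) (∫ x in a..b, F' (t, x)) t := by
  obtain ⟨C, hC⟩ := ((isCompact_closedBall t 1).prod (isCompact_uIcc (a := a) (b := b)))
    |>.exists_bound_of_continuousOn hF'.continuousOn
  have hslice {G : ℝ × ℝ → E} (hG : Continuous G) (s : ℝ) : Continuous fun x => G (s, x) :=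
    hG.comp (continuous_const.prodMk continuous_id)
  exact (intervalIntegral.hasDerivAt_integral_of_dominated_loc_of_deriv_le (bound := fun _ => C)
    (Metric.ball_mem_nhds t one_pos) (.of_forall fun s => (hslice hF s).aestronglyMeasurable)
    ((hslice hF t).intervalIntegrable a b) (hslice hF' t).aestronglyMeasurable
    (.of_forall fun x hx s hs =>
      hC (s, x) ⟨Metric.ball_subset_closedBall hs, Set.uIoc_subset_uIcc hx⟩)
    intervalIntegrable_const (.of_forall fun x _ s _ => hderiv s x)).2

theorem integral_eq_zero_of_hasDerivAt_of_periodic {E : Type*} [NormedAddCommGroup E]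
    [NormedSpace ℝ E] [CompleteSpace E] {ψ ψ' : ℝ → E} {c : ℝ}
    (hψ : Function.Periodic ψ c) (hderiv : ∀ x, HasDerivAt ψ (ψ' x) x) (a : ℝ)
    (hint : IntervalIntegrable ψ' volume a (a + c)) :
    ∫ x in a..a + c, ψ' x = 0 := by
  rw [intervalIntegral.integral_eq_sub_of_hasDerivAt (fun x _ => hderiv x) hint, hψ a, sub_self]

section Gauge

variable {K U : ℝ × ℝ → Matrix (Fin 2) (Fin 2) ℝ}

noncomputable def gaugeTransform (lam : ℝ) (K U : ℝ × ℝ → Matrix (Fin 2) (Fin 2) ℝ) :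
    ℝ × ℝ → Matrix (Fin 2) (Fin 2) ℝ :=
  fun z => (K z)⁻¹ * U z * K z + lam • ((K z)⁻¹ * DxM K z)

theorem commute_gaugeTransform_of_lax (hK : MSmooth2 K) (hKinv : ∀ z, IsUnit (K z))
    (lam : ℝ) (Λ : Matrix (Fin 2) (Fin 2) ℝ) (z : ℝ × ℝ)
    (hlax : (-lam) • DxM (fun z => K z * Λ * (K z)⁻¹) z
      + (K z * Λ * (K z)⁻¹ * U z - U z * (K z * Λ * (K z)⁻¹)) = 0) :
    Commute Λ (gaugeTransform lam K U z) := by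
  obtain ⟨t, x⟩ := z
  have hV := ((hK.hasMatrixDerivAt_dxM t x).mul_const Λ).mul
    (hK.hasMatrixDerivAt_dxM_inv hKinv t x)
  rw [((hK.mul (.const Λ)).mul (hK.nonsing_inv hKinv)).hasMatrixDerivAt_dxM t x |>.unique hV]
    at hlax
  exact commute_of_lax lam (nonsing_inv_mul _ ((isUnit_iff_isUnit_det _).mp (hKinv _))) hlax

theorem hasDerivAt_trace_gaugeTransform_mul (hK : MSmooth2 K) (hKinv : ∀ z, IsUnit (K z))
    (hU : MSmooth2 U) (lam : ℝ) (Λ : Matrix (Fin 2) (Fin 2) ℝ) (t x : ℝ)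
    (hcomm : Commute Λ (gaugeTransform lam K U (t, x))) :
    HasDerivAt (fun s => (gaugeTransform lam K U (s, x) * Λ).trace)
      ((DtM U (t, x) * (K (t, x) * Λ * (K (t, x))⁻¹)).trace
        + lam * (DxM (fun z => (K z)⁻¹ * DtM K z) (t, x) * Λ).trace) t := by
  have hNt := hK.hasMatrixDerivAt_dtM_inv hKinv t x
  have hM := ((hNt.mul (hU.hasMatrixDerivAt_dtM t x)).mul (hK.hasMatrixDerivAt_dtM t x)).add
    ((hNt.mul (hK.dxM.hasMatrixDerivAt_dtM t x)).const_smul lam)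
  have hX := (hK.hasMatrixDerivAt_dxM_inv hKinv t x).mul (hK.dtM.hasMatrixDerivAt_dxM t x)
  rw [((hK.nonsing_inv hKinv).mul hK.dtM).hasMatrixDerivAt_dxM t x |>.unique hX, hK.dxM_dtM,
    ← trace_gauge_deriv lam (mul_nonsing_inv _ ((isUnit_iff_isUnit_det _).mp (hKinv _))) hcomm]
  exact (hM.mul_const Λ).trace

theorem integral_trace_dxM_logDeriv_eq_zero (hK : MSmooth2 K) (hKinv : ∀ z, IsUnit (K z))
    (hKper : MPeriodicX K) (Λ : Matrix (Fin 2) (Fin 2) ℝ) (t : ℝ) :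
    ∫ x in (0 : ℝ)..1, (DxM (fun z => (K z)⁻¹ * DtM K z) (t, x) * Λ).trace = 0 := by
  have hX : MSmooth2 fun z => (K z)⁻¹ * DtM K z := (hK.nonsing_inv hKinv).mul hK.dtM
  have hXx := (hX.dxM.mul (.const Λ)).continuous_trace
  simpa using integral_eq_zero_of_hasDerivAt_of_periodic
    (ψ := fun y => ((K (t, y))⁻¹ * DtM K (t, y) * Λ).trace)
    (fun y => by simp only [hKper t y, hKper.dtM t y])
    (fun y => ((hX.hasMatrixDerivAt_dxM t y).mul_const Λ).trace) 0
    ((hXx.comp (continuous_const.prodMk continuous_id)).intervalIntegrable _ _)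

theorem hasDerivAt_integral_trace_gaugeTransform_mul (hK : MSmooth2 K)
    (hKinv : ∀ z, IsUnit (K z)) (hKper : MPeriodicX K) (hU : MSmooth2 U) (lam : ℝ)
    (Λ : Matrix (Fin 2) (Fin 2) ℝ) (hcomm : ∀ z, Commute Λ (gaugeTransform lam K U z)) (t : ℝ) :
    HasDerivAt (fun s => ∫ x in (0 : ℝ)..1, (gaugeTransform lam K U (s, x) * Λ).trace)
      (∫ x in (0 : ℝ)..1, (DtM U (t, x) * (K (t, x) * Λ * (K (t, x))⁻¹)).trace) t := by
  have hN := hK.nonsing_inv hKinv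
  have hF := ((((hN.mul hU).mul hK).add ((hN.mul hK.dxM).const_smul lam)).mul
    (.const Λ)).continuous_trace
  have hG := (hU.dtM.mul ((hK.mul (.const Λ)).mul hN)).continuous_trace
  have hXx := ((hN.mul hK.dtM).dxM.mul (.const Λ)).continuous_trace
  have hslice {G : ℝ × ℝ → ℝ} (hG : Continuous G) : Continuous fun x => G (t, x) :=
    hG.comp (continuous_const.prodMk continuous_id)
  have h := hasDerivAt_intervalIntegral_of_continuous_partial
    (F' := fun z => (DtM U z * (K z * Λ * (K z)⁻¹)).trace
      + lam * (DxM (fun z => (K z)⁻¹ * DtM K z) z * Λ).trace)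
    (fun s x => hasDerivAt_trace_gaugeTransform_mul hK hKinv hU lam Λ s x (hcomm (s, x)))
    hF (hG.add (continuous_const.mul hXx)) 0 1 t
  rwa [intervalIntegral.integral_add ((hslice hG).intervalIntegrable _ _)
      (((hslice hXx).intervalIntegrable _ _).const_mul lam), intervalIntegral.integral_const_mul,
    integral_trace_dxM_logDeriv_eq_zero hK hKinv hKper, mul_zero, add_zero] at h

end Gauge

theorem V_is_exact_oneForm_general (lam : ℝ)
    (Λ : Matrix (Fin 2) (Fin 2) ℝ)
    (S K : ℝ × ℝ → Matrix (Fin 2) (Fin 2) ℝ)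
    (hS : MSmooth2 S) (hK : MSmooth2 K)
    (hKper : MPeriodicX K)
    (hKinv : ∀ z : ℝ × ℝ, IsUnit (K z))
    (V M : ℝ × ℝ → Matrix (Fin 2) (Fin 2) ℝ)
    (hV : V = fun z => K z * Λ * (K z)⁻¹)
    (hM : M = fun z => (K z)⁻¹ * (S z - lam • A) * K z + lam • ((K z)⁻¹ * DxM K z))
    (hLax : ∀ z : ℝ × ℝ,
      (-lam) • DxM V z + (V z * (S z - lam • A) - (S z - lam • A) * V z) = 0) :
    ∀ t : ℝ,
      deriv (fun s => ∫ x in (0:ℝ)..1, (M (s, x) * Λ).trace) t =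
        ∫ x in (0:ℝ)..1, (DtM S (t, x) * V (t, x)).trace := by
  intro t
  subst hV hM
  have hcomm (z : ℝ × ℝ) : Commute Λ (gaugeTransform lam K (fun z => S z - lam • A) z) :=
    commute_gaugeTransform_of_lax hK hKinv lam Λ z (hLax z)
  have h := hasDerivAt_integral_trace_gaugeTransform_mul hK hKinv hKper (hS.sub (.const _)) lam Λ
    hcomm t
  rw [DtM_sub_const] at h
  exact h.deriv

theorem V_is_exact_oneForm (lam : ℝ) (hlam : lam ≠ 0)
    (Λ : Matrix (Fin 2) (Fin 2) ℝ)
    (S K : ℝ × ℝ → Matrix (Fin 2) (Fin 2) ℝ)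
    (hS : MSmooth2 S) (hK : MSmooth2 K)
    (hSper : MPeriodicX S) (hKper : MPeriodicX K)
    (hKinv : ∀ z : ℝ × ℝ, IsUnit (K z))
    (V M : ℝ × ℝ → Matrix (Fin 2) (Fin 2) ℝ)
    (hV : V = fun z => K z * Λ * (K z)⁻¹)
    (hM : M = fun z => (K z)⁻¹ * (S z - lam • A) * K z + lam • ((K z)⁻¹ * DxM K z))
    (hLax : ∀ z : ℝ × ℝ,
      (-lam) • DxM V z + (V z * (S z - lam • A) - (S z - lam • A) * V z) = 0) :
    ∀ t : ℝ,
      deriv (fun s => ∫ x in (0:ℝ)..1, (M (s, x) * Λ).trace) t =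
        ∫ x in (0:ℝ)..1, (DtM S (t, x) * V (t, x)).trace :=
  V_is_exact_oneForm_general lam Λ S K hS hK hKper hKinv V M hV hM hLax
end

section
/- Let λ be a nonzero real number, let p, q, r, v₁, v₂, v : ℝ → ℝ be smooth with v(x) > 0 for all x, set S := [[p,q],[r,−p]] and V := [[v₁, v₂],[v, −v₁]], and assume −λV′ + [V, S − λA] = 0 on ℝ and v₁² + v₂·v = F identically for a real constant F. Define K := [[v^{−1/2}, v₁·v^{−1/2}],[0, v^{1/2}]], Λ := [[0,F],[1,0]], and M := K⁻¹(S − λA)K + λ·K⁻¹K′. Then M = ((2r − λ)/(2v))·Λ, i.e. M = [[0, v⁻¹(r − λ/2)·F],[v⁻¹(r − λ/2), 0]], identically on ℝ. -/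
/-!
Read off in the entries (1,1) and (2,1), the Lax equation −λV′ + [V, S − λA] = 0 expresses
λv₁′ and λv′ algebraically through p, q, r, v₁, v₂, v. The gauge K is upper triangular with
determinant 1, so K⁻¹ and K⁻¹K′ are explicit; substituting the two derivatives into
K⁻¹(S − λA)K + λK⁻¹K′ kills the diagonal, and the invariant v₁² + v₂v = F collapses the
upper-right entry to (r − λ/2)F/v.
-/

open Matrix

theorem smul_of_fin_two (c a b d e : ℝ) : c • !![a, b; d, e] = !![c * a, c * b; c * d, c * e] := by
  ext i j; fin_cases i <;> fin_cases j <;> rfl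

theorem sub_smul_A (p q r lam : ℝ) :
    !![p, q; r, -p] - lam • A = !![p, q - lam / 2; r - lam / 2, -p] := by
  ext i j; fin_cases i <;> fin_cases j <;> simp [A] <;> ring

theorem commutator_traceless_fin_two (a b c p q r : ℝ) :
    !![a, b; c, -a] * !![p, q; r, -p] - !![p, q; r, -p] * !![a, b; c, -a] =
      !![b * r - q * c, 2 * (a * q - b * p); 2 * (c * p - a * r), q * c - b * r] := by
  ext i j; fin_cases i <;> fin_cases j <;> simp <;> ring

theorem lax_entries_fin_two {lam a b c p q r : ℝ} {D : Matrix (Fin 2) (Fin 2) ℝ}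
    (h : (-lam) • D +
      (!![a, b; c, -a] * !![p, q; r, -p] - !![p, q; r, -p] * !![a, b; c, -a]) = 0) :
    lam * D 0 0 = b * r - q * c ∧ lam * D 1 0 = 2 * (c * p - a * r) := by
  rw [commutator_traceless_fin_two] at h
  have h00 := congrFun (congrFun h 0) 0
  have h10 := congrFun (congrFun h 1) 0
  simp only [Matrix.add_apply, neg_smul, Matrix.neg_apply, Matrix.smul_apply, smul_eq_mul,
    of_apply, cons_val', cons_val_zero, cons_val_one, cons_val_fin_one, Matrix.zero_apply] at h00 h10
  constructor <;> linarith

noncomputable def gaugeMatrix (s u : ℝ) : Matrix (Fin 2) (Fin 2) ℝ := !![s⁻¹, u * s⁻¹; 0, s]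

theorem gaugeMatrix_inv {s : ℝ} (hs : s ≠ 0) (u : ℝ) :
    (gaugeMatrix s u)⁻¹ = !![s, -u * s⁻¹; 0, s⁻¹] := by
  apply inv_eq_right_inv
  ext i j; fin_cases i <;> fin_cases j <;> simp [gaugeMatrix, hs]
  ring

theorem gaugeMatrix_inv_mul_mul {s : ℝ} (hs : s ≠ 0) (u p q r : ℝ) :
    (gaugeMatrix s u)⁻¹ * !![p, q; r, -p] * gaugeMatrix s u =
      !![p - u * r / s ^ 2, 2 * p * u + q * s ^ 2 - r * u ^ 2 / s ^ 2;
         r / s ^ 2, r * u / s ^ 2 - p] := by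
  rw [gaugeMatrix_inv hs, gaugeMatrix]
  ext i j; fin_cases i <;> fin_cases j <;> simp <;> field_simp <;> ring

theorem gaugeMatrix_inv_mul_mderiv {w u : ℝ → ℝ} {w' u' x : ℝ} (hw : HasDerivAt w w' x)
    (hu : HasDerivAt u u' x) (hw0 : w x ≠ 0) :
    (gaugeMatrix (w x) (u x))⁻¹ * mderiv (fun t => gaugeMatrix (w t) (u t)) x =
      !![-(w' / w x), u' - 2 * u x * (w' / w x); 0, w' / w x] := by
  have hinv : HasDerivAt (fun t => (w t)⁻¹) (-w' / w x ^ 2) x := hw.inv hw0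
  have hprod : HasDerivAt (fun t => u t * (w t)⁻¹) (u' * (w x)⁻¹ + u x * (-w' / w x ^ 2)) x :=
    hu.mul hinv
  rw [gaugeMatrix_inv hw0]
  simp only [gaugeMatrix, mderiv_of_fin_two, hinv.deriv, hprod.deriv, hw.deriv, deriv_const]
  ext i j; fin_cases i <;> fin_cases j <;> simp <;> field_simp
  ring

theorem lax_gauge_identity {lam p q r u b v F du dv : ℝ} (hv : v ≠ 0)
    (hdu : lam * du = b * (r - lam / 2) - (q - lam / 2) * v)
    (hdv : lam * dv = 2 * (v * p - u * (r - lam / 2))) (hF : u ^ 2 + b * v = F) :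
    !![p - u * (r - lam / 2) / v, 2 * p * u + (q - lam / 2) * v - (r - lam / 2) * u ^ 2 / v;
        (r - lam / 2) / v, (r - lam / 2) * u / v - p] +
      lam • !![-(dv / (2 * v)), du - 2 * u * (dv / (2 * v)); 0, dv / (2 * v)] =
    !![0, v⁻¹ * (r - lam / 2) * F; v⁻¹ * (r - lam / 2), 0] := by
  ext i j; fin_cases i <;> fin_cases j <;> simp <;> field_simp
  · linear_combination -hdv
  · linear_combination 2 * v * hdu - 2 * u * hdv + (2 * r - lam) * hF
  · linear_combination hdv

theorem M_explicit_form_general (lam : ℝ)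
    (p q r v₁ v₂ v : ℝ → ℝ)
    (hv₁ : ContDiff ℝ (⊤ : ℕ∞) v₁)
    (hv : ContDiff ℝ (⊤ : ℕ∞) v)
    (hvpos : ∀ x, 0 < v x)
    (S V : ℝ → Matrix (Fin 2) (Fin 2) ℝ)
    (hS : S = fun x => !![p x, q x; r x, -p x])
    (hV : V = fun x => !![v₁ x, v₂ x; v x, -v₁ x])
    (hLax : ∀ x : ℝ,
      (-lam) • mderiv V x + (V x * (S x - lam • A) - (S x - lam • A) * V x) = 0)
    (F : ℝ) (hF : ∀ x, v₁ x ^ 2 + v₂ x * v x = F)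
    (K : ℝ → Matrix (Fin 2) (Fin 2) ℝ)
    (hK : K = fun x => !![(Real.sqrt (v x))⁻¹, v₁ x * (Real.sqrt (v x))⁻¹;
                          0, Real.sqrt (v x)])
    (Λ : Matrix (Fin 2) (Fin 2) ℝ) (hΛ : Λ = !![0, F; 1, 0])
    (M : ℝ → Matrix (Fin 2) (Fin 2) ℝ)
    (hM : M = fun x => (K x)⁻¹ * (S x - lam • A) * K x + lam • ((K x)⁻¹ * mderiv K x)) :
    ∀ x : ℝ, M x = ((2 * r x - lam) / (2 * v x)) • Λ ∧
      M x = !![0, (v x)⁻¹ * (r x - lam / 2) * F;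
               (v x)⁻¹ * (r x - lam / 2), 0] := by
  replace hK : K = fun x => gaugeMatrix √(v x) (v₁ x) := hK
  subst hS hV hK hΛ
  intro x
  have hvx := hvpos x
  have hsqrt : 0 < √(v x) := Real.sqrt_pos.mpr hvx
  have hdv := (hv.differentiable (by simp) x).hasDerivAt
  have hdv₁ := (hv₁.differentiable (by simp) x).hasDerivAt
  have hlogderiv : deriv v x / (2 * √(v x)) / √(v x) = deriv v x / (2 * v x) := by
    rw [div_div, mul_assoc, Real.mul_self_sqrt hvx.le]
  obtain ⟨lax₀, lax₁⟩ := lax_entries_fin_two (by simpa only [sub_smul_A] using hLax x)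
  simp only [mderiv_of_fin_two, of_apply, cons_val', cons_val_zero, cons_val_one] at lax₀ lax₁
  have hMx : M x = !![0, (v x)⁻¹ * (r x - lam / 2) * F; (v x)⁻¹ * (r x - lam / 2), 0] := by
    rw [hM]
    dsimp only
    rw [sub_smul_A, gaugeMatrix_inv_mul_mul hsqrt.ne',
      gaugeMatrix_inv_mul_mderiv (hdv.sqrt hvx.ne') hdv₁ hsqrt.ne', hlogderiv, Real.sq_sqrt hvx.le]
    exact lax_gauge_identity hvx.ne' lax₀ lax₁ (hF x)
  refine ⟨?_, hMx⟩
  have hcoef : (2 * r x - lam) / (2 * v x) = (v x)⁻¹ * (r x - lam / 2) := by ring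
  rw [hMx, hcoef, smul_of_fin_two, mul_zero, mul_one, mul_comm _ F]

theorem M_explicit_form (lam : ℝ) (hlam : lam ≠ 0)
    (p q r v₁ v₂ v : ℝ → ℝ)
    (hp : ContDiff ℝ (⊤ : ℕ∞) p) (hq : ContDiff ℝ (⊤ : ℕ∞) q)
    (hr : ContDiff ℝ (⊤ : ℕ∞) r) (hv₁ : ContDiff ℝ (⊤ : ℕ∞) v₁)
    (hv₂ : ContDiff ℝ (⊤ : ℕ∞) v₂) (hv : ContDiff ℝ (⊤ : ℕ∞) v)
    (hvpos : ∀ x, 0 < v x)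
    (S V : ℝ → Matrix (Fin 2) (Fin 2) ℝ)
    (hS : S = fun x => !![p x, q x; r x, -p x])
    (hV : V = fun x => !![v₁ x, v₂ x; v x, -v₁ x])
    (hLax : ∀ x : ℝ,
      (-lam) • mderiv V x + (V x * (S x - lam • A) - (S x - lam • A) * V x) = 0)
    (F : ℝ) (hF : ∀ x, v₁ x ^ 2 + v₂ x * v x = F)
    (K : ℝ → Matrix (Fin 2) (Fin 2) ℝ)
    (hK : K = fun x => !![(Real.sqrt (v x))⁻¹, v₁ x * (Real.sqrt (v x))⁻¹;
                          0, Real.sqrt (v x)])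
    (Λ : Matrix (Fin 2) (Fin 2) ℝ) (hΛ : Λ = !![0, F; 1, 0])
    (M : ℝ → Matrix (Fin 2) (Fin 2) ℝ)
    (hM : M = fun x => (K x)⁻¹ * (S x - lam • A) * K x + lam • ((K x)⁻¹ * mderiv K x)) :
    ∀ x : ℝ, M x = ((2 * r x - lam) / (2 * v x)) • Λ ∧
      M x = !![0, (v x)⁻¹ * (r x - lam / 2) * F;
               (v x)⁻¹ * (r x - lam / 2), 0] :=
  M_explicit_form_general lam p q r v₁ v₂ v hv₁ hv hvpos S V hS hV hLax F hF K hK Λ hΛ M hM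
end

section
/- Let λ be a nonzero real number and p, q, r, v₁, v₂, v : ℝ → ℝ smooth functions with 2r(x) − λ ≠ 0 for all x. Set S := [[p,q],[r,−p]] and V := [[v₁, v₂],[v, −v₁]], and assume −λV′ + [V, S − λA] = 0 on ℝ. Then v₁ = (−λv′ + 2vp)/(2r − λ) and v₂ = 4·(λ²r′v′ − 2λr′pv)/(2r − λ)³ + 2·(−λ²v′′ + 2λpv′ + 2λvp′)/(2r − λ)² + v(2q − λ)/(2r − λ), identically on ℝ. -/
open Matrix

/-! The (1,0) entry of the Lax equation is algebraic in `v₁` and gives `v₁ (2r - λ) = -λv' + 2pv`;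
the (0,0) entry expresses `v₂ (2r - λ)` through `v₁'`, and differentiating the first relation
turns `v₁'` into derivatives of `v`, `p` and `r`. -/

lemma traceless_sub_smul_A (lam a b c : ℝ) :
    !![a, b; c, -a] - lam • A = !![a, b - lam / 2; c - lam / 2, -a] := by
  ext i j; fin_cases i <;> fin_cases j <;> simp [A] <;> ring

lemma traceless_commutator (a b c d e f : ℝ) :
    !![a, b; c, -a] * !![d, e; f, -d] - !![d, e; f, -d] * !![a, b; c, -a]
      = !![b * f - c * e, 2 * (a * e - b * d); 2 * (c * d - a * f), c * e - b * f] := by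
  rw [mul_fin_two, mul_fin_two]
  ext i j; fin_cases i <;> fin_cases j <;> simp <;> ring

lemma lax_entry_relations {lam : ℝ} {p q r v₁ v₂ v : ℝ → ℝ} {x : ℝ}
    (h : (-lam) • mderiv (fun x => !![v₁ x, v₂ x; v x, -v₁ x]) x
      + (!![v₁ x, v₂ x; v x, -v₁ x] * (!![p x, q x; r x, -p x] - lam • A)
        - (!![p x, q x; r x, -p x] - lam • A) * !![v₁ x, v₂ x; v x, -v₁ x]) = 0) :
    v₂ x * (2 * r x - lam) = 2 * lam * deriv v₁ x + v x * (2 * q x - lam) ∧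
    v₁ x * (2 * r x - lam) = -lam * deriv v x + 2 * p x * v x := by
  rw [traceless_sub_smul_A, traceless_commutator] at h
  have h₀₀ := congrFun (congrFun h 0) 0
  have h₁₀ := congrFun (congrFun h 1) 0
  simp only [mderiv, Matrix.add_apply, Matrix.smul_apply, of_apply, Matrix.zero_apply,
    smul_eq_mul, cons_val', cons_val_zero, cons_val_one, empty_val', cons_val_fin_one] at h₀₀ h₁₀
  constructor
  · linear_combination 2 * h₀₀
  · linear_combination -h₁₀

lemma deriv_lax_entry_relation {lam : ℝ} {p r v₁ v : ℝ → ℝ} {x : ℝ}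
    (hp : DifferentiableAt ℝ p x) (hr : DifferentiableAt ℝ r x)
    (hv₁ : DifferentiableAt ℝ v₁ x) (hv : DifferentiableAt ℝ v x)
    (hv' : DifferentiableAt ℝ (deriv v) x)
    (h : ∀ t, v₁ t * (2 * r t - lam) = -lam * deriv v t + 2 * p t * v t) :
    deriv v₁ x * (2 * r x - lam) + 2 * v₁ x * deriv r x
      = -lam * deriv (deriv v) x + 2 * deriv p x * v x + 2 * p x * deriv v x := by
  have hL : HasDerivAt (fun t => v₁ t * (2 * r t - lam)) _ x :=
    hv₁.hasDerivAt.mul ((hr.hasDerivAt.const_mul 2).sub_const lam)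
  have hR : HasDerivAt (fun t => -lam * deriv v t + 2 * p t * v t) _ x :=
    (hv'.hasDerivAt.const_mul (-lam)).add ((hp.hasDerivAt.const_mul 2).mul hv.hasDerivAt)
  rw [funext h] at hL
  linear_combination hL.unique hR

lemma v₂_eq_of_lax_relations {lam p p' q r r' v v' v'' v₁ v₁' v₂ : ℝ} (hd : 2 * r - lam ≠ 0)
    (h₀ : v₂ * (2 * r - lam) = 2 * lam * v₁' + v * (2 * q - lam))
    (h₁ : v₁ * (2 * r - lam) = -lam * v' + 2 * p * v)
    (h₁' : v₁' * (2 * r - lam) + 2 * v₁ * r' = -lam * v'' + 2 * p' * v + 2 * p * v') :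
    v₂ = 4 * (lam ^ 2 * r' * v' - 2 * lam * r' * p * v) / (2 * r - lam) ^ 3
      + 2 * (-lam ^ 2 * v'' + 2 * lam * p * v' + 2 * lam * v * p') / (2 * r - lam) ^ 2
      + v * (2 * q - lam) / (2 * r - lam) := by
  field_simp
  linear_combination (2 * r - lam) ^ 2 * h₀ + 2 * lam * (2 * r - lam) * h₁'
    - 4 * lam * r' * h₁

theorem v₁_v₂_in_terms_of_v_general (lam : ℝ)
    (p q r v₁ v₂ v : ℝ → ℝ)
    (hp : ContDiff ℝ (⊤ : ℕ∞) p)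
    (hr : ContDiff ℝ (⊤ : ℕ∞) r) (hv₁ : ContDiff ℝ (⊤ : ℕ∞) v₁)
    (hv : ContDiff ℝ (⊤ : ℕ∞) v)
    (hden : ∀ x, 2 * r x - lam ≠ 0)
    (S V : ℝ → Matrix (Fin 2) (Fin 2) ℝ)
    (hS : S = fun x => !![p x, q x; r x, -p x])
    (hV : V = fun x => !![v₁ x, v₂ x; v x, -v₁ x])
    (hLax : ∀ x : ℝ,
      (-lam) • mderiv V x + (V x * (S x - lam • A) - (S x - lam • A) * V x) = 0) :
    ∀ x : ℝ,
      v₁ x = (-lam * deriv v x + 2 * v x * p x) / (2 * r x - lam) ∧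
      v₂ x = 4 * (lam ^ 2 * deriv r x * deriv v x - 2 * lam * deriv r x * p x * v x)
                / (2 * r x - lam) ^ 3
           + 2 * (-lam ^ 2 * deriv (deriv v) x + 2 * lam * p x * deriv v x
                  + 2 * lam * v x * deriv p x) / (2 * r x - lam) ^ 2
           + v x * (2 * q x - lam) / (2 * r x - lam) := by
  subst hS hV
  have hv' : Differentiable ℝ (deriv v) :=
    (contDiff_infty_iff_deriv.mp hv).2.differentiable (by simp)
  have h₁ (t : ℝ) := (lax_entry_relations (hLax t)).2
  intro x
  obtain ⟨h₀, -⟩ := lax_entry_relations (hLax x)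
  have h₁' := deriv_lax_entry_relation (hp.differentiable (by simp) x) (hr.differentiable (by simp) x)
    (hv₁.differentiable (by simp) x) (hv.differentiable (by simp) x) (hv' x) h₁
  refine ⟨?_, v₂_eq_of_lax_relations (hden x) h₀ (h₁ x) h₁'⟩
  rw [eq_div_iff (hden x)]
  linear_combination h₁ x

theorem v₁_v₂_in_terms_of_v (lam : ℝ) (hlam : lam ≠ 0)
    (p q r v₁ v₂ v : ℝ → ℝ)
    (hp : ContDiff ℝ (⊤ : ℕ∞) p) (hq : ContDiff ℝ (⊤ : ℕ∞) q)
    (hr : ContDiff ℝ (⊤ : ℕ∞) r) (hv₁ : ContDiff ℝ (⊤ : ℕ∞) v₁)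
    (hv₂ : ContDiff ℝ (⊤ : ℕ∞) v₂) (hv : ContDiff ℝ (⊤ : ℕ∞) v)
    (hden : ∀ x, 2 * r x - lam ≠ 0)
    (S V : ℝ → Matrix (Fin 2) (Fin 2) ℝ)
    (hS : S = fun x => !![p x, q x; r x, -p x])
    (hV : V = fun x => !![v₁ x, v₂ x; v x, -v₁ x])
    (hLax : ∀ x : ℝ,
      (-lam) • mderiv V x + (V x * (S x - lam • A) - (S x - lam • A) * V x) = 0) :
    ∀ x : ℝ,
      v₁ x = (-lam * deriv v x + 2 * v x * p x) / (2 * r x - lam) ∧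
      v₂ x = 4 * (lam ^ 2 * deriv r x * deriv v x - 2 * lam * deriv r x * p x * v x)
                / (2 * r x - lam) ^ 3
           + 2 * (-lam ^ 2 * deriv (deriv v) x + 2 * lam * p x * deriv v x
                  + 2 * lam * v x * deriv p x) / (2 * r x - lam) ^ 2
           + v x * (2 * q x - lam) / (2 * r x - lam) :=
  v₁_v₂_in_terms_of_v_general lam p q r v₁ v₂ v hp hr hv₁ hv hden S V hS hV hLax
end

section
/- Let λ be a nonzero real number, F a real number, and p, q, r, v₁, v₂, v : ℝ → ℝ smooth functions with 2r(x) − λ ≠ 0 for all x. Set S := [[p,q],[r,−p]] and V := [[v₁, v₂],[v, −v₁]], and assume −λV′ + [V, S − λA] = 0 on ℝ and v₁² + v₂·v = F identically. Then v satisfies (2r − λ)³·F − λ²(2r − λ)(v′)² + 2λ²(2r − λ)v′′v − 4r′λ²·v′v + v²·(λ³ + 2λ²(2p′ − q − 2r) + 4λ(−2p′r + 2r′p + p² + 2qr + r²) − 8r(p² + qr)) = 0 identically on ℝ. -/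
open Matrix

/-! The `(0,0)` and `(1,0)` entries of the Lax equation give `λ v₁' = (r - λ/2) v₂ - (q - λ/2) v`
and `λ v' = 2 p v - (2r - λ) v₁`. Differentiating the second and eliminating `v₁'` with the first
expresses `λ² v''` through `v, v', v₁, v₂`; squaring `λ v'` brings in `v₁²`, and `v₁² + v₂ v = F`
then removes `v₁` and `v₂`. Since `v', v''` only occur as `λ v'` and `λ² v''`, the result is a
polynomial combination of these four relations. -/

theorem lax_entries {lam : ℝ} {p q r a b c : ℝ → ℝ} {x : ℝ}
    (hLax : let S := !![p x, q x; r x, -p x] - lam • A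
      let V := !![a x, b x; c x, -a x]
      (-lam) • mderiv (fun t => !![a t, b t; c t, -a t]) x + (V * S - S * V) = 0) :
    lam * deriv a x = (r x - lam / 2) * b x - (q x - lam / 2) * c x ∧
      lam * deriv c x = 2 * p x * c x - (2 * r x - lam) * a x := by
  have h00 := congrFun (congrFun hLax 0) 0
  have h10 := congrFun (congrFun hLax 1) 0
  simp [mderiv, A] at h00 h10
  constructor <;> linarith

theorem lam_mul_deriv_deriv {lam : ℝ} {p r a c : ℝ → ℝ}
    (h : ∀ t, lam * deriv c t = 2 * p t * c t - (2 * r t - lam) * a t) {x : ℝ}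
    (hp : DifferentiableAt ℝ p x) (hr : DifferentiableAt ℝ r x)
    (ha : DifferentiableAt ℝ a x) (hc : DifferentiableAt ℝ c x) :
    lam * deriv (deriv c) x = 2 * deriv p x * c x + 2 * p x * deriv c x
      - (2 * deriv r x * a x + (2 * r x - lam) * deriv a x) := by
  have hRHS : HasDerivAt (fun t => 2 * p t * c t - (2 * r t - lam) * a t)
      (2 * deriv p x * c x + 2 * p x * deriv c x
        - (2 * deriv r x * a x + (2 * r x - lam) * deriv a x)) x :=
    ((hp.hasDerivAt.const_mul 2).mul hc.hasDerivAt).sub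
      (((hr.hasDerivAt.const_mul 2).sub_const lam).mul ha.hasDerivAt)
  rw [← deriv_const_mul_field, funext h, hRHS.deriv]

theorem equation_for_v_general (lam : ℝ) (F : ℝ)
    (p q r v₁ v₂ v : ℝ → ℝ)
    (hp : ContDiff ℝ (⊤ : ℕ∞) p)
    (hr : ContDiff ℝ (⊤ : ℕ∞) r) (hv₁ : ContDiff ℝ (⊤ : ℕ∞) v₁)
    (hv : ContDiff ℝ (⊤ : ℕ∞) v)
    (S V : ℝ → Matrix (Fin 2) (Fin 2) ℝ)
    (hS : S = fun x => !![p x, q x; r x, -p x])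
    (hV : V = fun x => !![v₁ x, v₂ x; v x, -v₁ x])
    (hLax : ∀ x : ℝ,
      (-lam) • mderiv V x + (V x * (S x - lam • A) - (S x - lam • A) * V x) = 0)
    (hF : ∀ x, v₁ x ^ 2 + v₂ x * v x = F) :
    ∀ x : ℝ,
      (2 * r x - lam) ^ 3 * F
        - lam ^ 2 * (2 * r x - lam) * (deriv v x) ^ 2
        + 2 * lam ^ 2 * (2 * r x - lam) * deriv (deriv v) x * v x
        - 4 * deriv r x * lam ^ 2 * deriv v x * v x
        + (v x) ^ 2 * (lam ^ 3
            + 2 * lam ^ 2 * (2 * deriv p x - q x - 2 * r x)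
            + 4 * lam * (-2 * deriv p x * r x + 2 * deriv r x * p x + (p x) ^ 2
                + 2 * q x * r x + (r x) ^ 2)
            - 8 * r x * ((p x) ^ 2 + q x * r x)) = 0 := by
  subst hS hV
  intro x
  have hdiff {f : ℝ → ℝ} (hf : ContDiff ℝ (⊤ : ℕ∞) f) : DifferentiableAt ℝ f x :=
    hf.differentiable (by simp) x
  obtain ⟨h1, h2⟩ := lax_entries (hLax x)
  have hd := lam_mul_deriv_deriv (fun t => (lax_entries (hLax t)).2)
    (hdiff hp) (hdiff hr) (hdiff hv₁) (hdiff hv)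
  set k := 2 * r x - lam
  linear_combination (2 * lam * k * v x) * hd - 2 * k ^ 2 * v x * h1
    + (-k * (lam * deriv v x + 2 * p x * v x - k * v₁ x) + 4 * k * v x * p x
      - 4 * deriv r x * lam * v x) * h2 - k ^ 3 * hF x

theorem equation_for_v (lam : ℝ) (hlam : lam ≠ 0) (F : ℝ)
    (p q r v₁ v₂ v : ℝ → ℝ)
    (hp : ContDiff ℝ (⊤ : ℕ∞) p) (hq : ContDiff ℝ (⊤ : ℕ∞) q)
    (hr : ContDiff ℝ (⊤ : ℕ∞) r) (hv₁ : ContDiff ℝ (⊤ : ℕ∞) v₁)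
    (hv₂ : ContDiff ℝ (⊤ : ℕ∞) v₂) (hv : ContDiff ℝ (⊤ : ℕ∞) v)
    (hden : ∀ x, 2 * r x - lam ≠ 0)
    (S V : ℝ → Matrix (Fin 2) (Fin 2) ℝ)
    (hS : S = fun x => !![p x, q x; r x, -p x])
    (hV : V = fun x => !![v₁ x, v₂ x; v x, -v₁ x])
    (hLax : ∀ x : ℝ,
      (-lam) • mderiv V x + (V x * (S x - lam • A) - (S x - lam • A) * V x) = 0)
    (hF : ∀ x, v₁ x ^ 2 + v₂ x * v x = F) :
    ∀ x : ℝ,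
      (2 * r x - lam) ^ 3 * F
        - lam ^ 2 * (2 * r x - lam) * (deriv v x) ^ 2
        + 2 * lam ^ 2 * (2 * r x - lam) * deriv (deriv v) x * v x
        - 4 * deriv r x * lam ^ 2 * deriv v x * v x
        + (v x) ^ 2 * (lam ^ 3
            + 2 * lam ^ 2 * (2 * deriv p x - q x - 2 * r x)
            + 4 * lam * (-2 * deriv p x * r x + 2 * deriv r x * p x + (p x) ^ 2
                + 2 * q x * r x + (r x) ^ 2)
            - 8 * r x * ((p x) ^ 2 + q x * r x)) = 0 :=
  equation_for_v_general lam F p q r v₁ v₂ v hp hr hv₁ hv S V hS hV hLax hF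
end

section
/- Let λ ≠ 0 and F > 0 be real numbers, and let p, q, r, v : ℝ → ℝ be smooth with v(x) ≠ 0 for all x, satisfying (2r − λ)³·F − λ²(2r − λ)(v′)² + 2λ²(2r − λ)v′′v − 4r′λ²·v′v + v²·(λ³ + 2λ²(2p′ − q − 2r) + 4λ(−2p′r + 2r′p + p² + 2qr + r²) − 8r(p² + qr)) = 0 identically on ℝ. Define h := v′/(2v) + √F·(2r − λ)/(2λv). Then h satisfies the Riccati-type equation (h′ + h²)(2r − λ)λ² − 2r′·h·λ² = −(1/4)λ³ + (r + (1/2)q − p′)·λ² + (−r² − 2r′p − 2qr + 2p′r − p²)·λ + 2qr² + 2p²r identically on ℝ. -/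
/-! With `w = 2r - λ` and `s = √F`, the cross terms `± s w v' / (2λv²)` cancel in `h' + h²`, and
then `(h' + h²) w λ² - 2 r' h λ²` is `(s² w³ - λ² w v'² + 2 λ² w v'' v - 4 r' λ² v' v) / (4 v²)`.
Since `s² = F`, the hypothesis says this numerator is `-v²` times the bracket it multiplies, which
is `-4` times the right-hand side of the Riccati equation. -/

theorem hasDerivAt_riccati_ansatz {u v r : ℝ → ℝ} {x u' v' r' lam : ℝ} (s : ℝ)
    (hu : HasDerivAt u u' x) (hv : HasDerivAt v v' x) (hr : HasDerivAt r r' x) (hvx : v x ≠ 0) (hlam : lam ≠ 0) :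
    HasDerivAt (fun x => u x / (2 * v x) + s * (2 * r x - lam) / (2 * lam * v x))
      ((u' * v x - u x * v') / (2 * v x ^ 2)
        + s * (2 * r' * v x - (2 * r x - lam) * v') / (2 * lam * v x ^ 2)) x := by
  refine ((hu.div (hv.const_mul 2) (by simp [hvx])).add
    ((((hr.const_mul 2).sub_const lam).const_mul s).div (hv.const_mul (2 * lam))
      (by simp [hvx, hlam]))).congr_deriv ?_
  field_simp

theorem riccati_ansatz_identity (lam s r r' v v' v'' : ℝ) (hv : v ≠ 0) (hlam : lam ≠ 0) :
    let h := v' / (2 * v) + s * (2 * r - lam) / (2 * lam * v)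
    let h' := (v'' * v - v' * v') / (2 * v ^ 2)
      + s * (2 * r' * v - (2 * r - lam) * v') / (2 * lam * v ^ 2)
    (h' + h ^ 2) * (2 * r - lam) * lam ^ 2 - 2 * r' * h * lam ^ 2 =
      (s ^ 2 * (2 * r - lam) ^ 3 - lam ^ 2 * (2 * r - lam) * v' ^ 2
        + 2 * lam ^ 2 * (2 * r - lam) * v'' * v - 4 * r' * lam ^ 2 * v' * v) / (4 * v ^ 2) := by
  intro h h'
  simp only [h, h']
  field_simp
  ring

theorem riccati_equation_for_h_general (lam : ℝ) (hlam : lam ≠ 0) (F : ℝ) (hF : 0 < F)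
    (p q r v : ℝ → ℝ)
    (hr : ContDiff ℝ (⊤ : ℕ∞) r) (hv : ContDiff ℝ (⊤ : ℕ∞) v)
    (hvne : ∀ x, v x ≠ 0)
    (heqv : ∀ x : ℝ,
      (2 * r x - lam) ^ 3 * F
        - lam ^ 2 * (2 * r x - lam) * (deriv v x) ^ 2
        + 2 * lam ^ 2 * (2 * r x - lam) * deriv (deriv v) x * v x
        - 4 * deriv r x * lam ^ 2 * deriv v x * v x
        + (v x) ^ 2 * (lam ^ 3
            + 2 * lam ^ 2 * (2 * deriv p x - q x - 2 * r x)
            + 4 * lam * (-2 * deriv p x * r x + 2 * deriv r x * p x + (p x) ^ 2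
                + 2 * q x * r x + (r x) ^ 2)
            - 8 * r x * ((p x) ^ 2 + q x * r x)) = 0)
    (h : ℝ → ℝ)
    (hdef : h = fun x => deriv v x / (2 * v x)
      + Real.sqrt F * (2 * r x - lam) / (2 * lam * v x)) :
    ∀ x : ℝ,
      (deriv h x + h x ^ 2) * (2 * r x - lam) * lam ^ 2
          - 2 * deriv r x * h x * lam ^ 2 =
        -(1/4) * lam ^ 3 + (r x + (1/2) * q x - deriv p x) * lam ^ 2
          + (-(r x) ^ 2 - 2 * deriv r x * p x - 2 * q x * r x + 2 * deriv p x * r x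
              - (p x) ^ 2) * lam
          + 2 * q x * (r x) ^ 2 + 2 * (p x) ^ 2 * r x := by
  intro x
  have hv' : ContDiff ℝ (⊤ : ℕ∞) (deriv v) := (contDiff_infty_iff_deriv.mp hv).2
  have hderiv := hasDerivAt_riccati_ansatz (Real.sqrt F)
    ((hv'.differentiable (by simp)) x).hasDerivAt ((hv.differentiable (by simp)) x).hasDerivAt
    ((hr.differentiable (by simp)) x).hasDerivAt (hvne x) hlam
  subst hdef
  rw [hderiv.deriv, riccati_ansatz_identity _ _ _ _ _ _ _ (hvne x) hlam, Real.sq_sqrt hF.le]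
  field_simp [hvne x]
  linear_combination 2 * heqv x

theorem riccati_equation_for_h (lam : ℝ) (hlam : lam ≠ 0) (F : ℝ) (hF : 0 < F)
    (p q r v : ℝ → ℝ)
    (hp : ContDiff ℝ (⊤ : ℕ∞) p) (hq : ContDiff ℝ (⊤ : ℕ∞) q)
    (hr : ContDiff ℝ (⊤ : ℕ∞) r) (hv : ContDiff ℝ (⊤ : ℕ∞) v)
    (hvne : ∀ x, v x ≠ 0)
    (heqv : ∀ x : ℝ,
      (2 * r x - lam) ^ 3 * F
        - lam ^ 2 * (2 * r x - lam) * (deriv v x) ^ 2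
        + 2 * lam ^ 2 * (2 * r x - lam) * deriv (deriv v) x * v x
        - 4 * deriv r x * lam ^ 2 * deriv v x * v x
        + (v x) ^ 2 * (lam ^ 3
            + 2 * lam ^ 2 * (2 * deriv p x - q x - 2 * r x)
            + 4 * lam * (-2 * deriv p x * r x + 2 * deriv r x * p x + (p x) ^ 2
                + 2 * q x * r x + (r x) ^ 2)
            - 8 * r x * ((p x) ^ 2 + q x * r x)) = 0)
    (h : ℝ → ℝ)
    (hdef : h = fun x => deriv v x / (2 * v x)
      + Real.sqrt F * (2 * r x - lam) / (2 * lam * v x)) :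
    ∀ x : ℝ,
      (deriv h x + h x ^ 2) * (2 * r x - lam) * lam ^ 2
          - 2 * deriv r x * h x * lam ^ 2 =
        -(1/4) * lam ^ 3 + (r x + (1/2) * q x - deriv p x) * lam ^ 2
          + (-(r x) ^ 2 - 2 * deriv r x * p x - 2 * q x * r x + 2 * deriv p x * r x
              - (p x) ^ 2) * lam
          + 2 * q x * (r x) ^ 2 + 2 * (p x) ^ 2 * r x :=
  riccati_equation_for_h_general lam hlam F hF p q r v hr hv hvne heqv h hdef
end

section
/- Let h : ℝ → ℝ be a differentiable 1-periodic function satisfying h′(x) + h(x)² = 1/4 for all x ∈ ℝ. Then either h(x) = 1/2 for all x, or h(x) = −1/2 for all x. -/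
theorem periodic_riccati_leading_coefficient (h : ℝ → ℝ)
    (hdiff : Differentiable ℝ h) (hper : Function.Periodic h 1)
    (heq : ∀ x : ℝ, deriv h x + h x ^ 2 = 1/4) :
    (∀ x, h x = 1/2) ∨ (∀ x, h x = -(1/2)) := by
  have hcont : Continuous h := hdiff.continuous
  -- max and min on [0,1]
  obtain ⟨a, ha, hamax⟩ := (isCompact_Icc (a := (0:ℝ)) (b := 1)).exists_isMaxOn
    (Set.nonempty_Icc.2 zero_le_one) hcont.continuousOn
  obtain ⟨b, hb, hbmin⟩ := (isCompact_Icc (a := (0:ℝ)) (b := 1)).exists_isMinOn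
    (Set.nonempty_Icc.2 zero_le_one) hcont.continuousOn
  -- global max/min
  have hgmax : ∀ x, h x ≤ h a := by
    intro x
    obtain ⟨y, hy, hxy⟩ := hper.exists_mem_Ico₀ one_pos x
    rw [hxy]
    exact hamax (Set.Ico_subset_Icc_self hy)
  have hgmin : ∀ x, h b ≤ h x := by
    intro x
    obtain ⟨y, hy, hxy⟩ := hper.exists_mem_Ico₀ one_pos x
    rw [hxy]
    exact hbmin (Set.Ico_subset_Icc_self hy)
  have hda : deriv h a = 0 := by
    have : IsLocalMax h a := Filter.Eventually.of_forall hgmax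
    exact this.deriv_eq_zero
  have hdb : deriv h b = 0 := by
    have : IsLocalMin h b := Filter.Eventually.of_forall hgmin
    exact this.deriv_eq_zero
  have ha2 : h a = 1/2 ∨ h a = -(1/2) := by
    have := heq a; rw [hda] at this
    have : (h a - 1/2) * (h a + 1/2) = 0 := by nlinarith
    rcases mul_eq_zero.1 this with h1 | h1
    · left; linarith
    · right; linarith
  have hb2 : h b = 1/2 ∨ h b = -(1/2) := by
    have := heq b; rw [hdb] at this
    have : (h b - 1/2) * (h b + 1/2) = 0 := by nlinarith
    rcases mul_eq_zero.1 this with h1 | h1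
    · left; linarith
    · right; linarith
  rcases hb2 with hbv | hbv
  · -- min = 1/2, so h ≥ 1/2 everywhere; max is ±1/2, must be 1/2
    left
    rcases ha2 with hav | hav
    · intro x; exact le_antisymm (hav ▸ hgmax x) (hbv ▸ hgmin x)
    · exfalso
      have := hgmin a
      rw [hbv, hav] at this; linarith
  · rcases ha2 with hav | hav
    · -- -1/2 ≤ h ≤ 1/2 : deriv ≥ 0, monotone + periodic ⇒ constant
      have hd : ∀ x, 0 ≤ deriv h x := by
        intro x
        have h1 : h x ≤ 1/2 := hav ▸ hgmax x
        have h2 : -(1/2) ≤ h x := hbv ▸ hgmin x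
        have := heq x
        nlinarith
      have hmono : Monotone h := monotone_of_deriv_nonneg hdiff hd
      have hconst : ∀ x, h x = h 0 := by
        intro x
        have hint : ∀ n : ℤ, h (n : ℝ) = h 0 := by
          intro n
          have := hper.int_mul_eq n
          simpa using this
        have h1 : h (⌊x⌋ : ℝ) ≤ h x := hmono (Int.floor_le x)
        have h2 : h x ≤ h ((⌊x⌋ : ℝ) + 1) := hmono (Int.lt_floor_add_one x).le
        have e1 : h (⌊x⌋ : ℝ) = h 0 := hint ⌊x⌋
        have e2 : h ((⌊x⌋ : ℝ) + 1) = h 0 := by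
          have := hint (⌊x⌋ + 1)
          simpa using this
        linarith
      -- h is constant; value is ±1/2
      have hd0 : deriv h 0 = 0 := by
        have : h = fun _ => h 0 := funext hconst
        rw [this]
        simp
      have := heq 0
      rw [hd0] at this
      have hcases : (h 0 - 1/2) * (h 0 + 1/2) = 0 := by nlinarith
      rcases mul_eq_zero.1 hcases with h1 | h1
      · left; intro x; rw [hconst x]; linarith
      · right; intro x; rw [hconst x]; linarith
    · -- max = -1/2 : h ≤ -1/2 everywhere, and ≥ min = -1/2
      right
      intro x
      exact le_antisymm (hav ▸ hgmax x) (hbv ▸ hgmin x)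
end

section
/- Let p, q, r, γ, h₂ : ℝ → ℝ be smooth 1-periodic functions with γ′′ − γ = (1/2)(q − r) − p′ on ℝ. Set w := γ − γ′ − r and suppose h₂′ + h₂ = 2r·(−(1/2)(r + q) − r′ + p′) − w² − 2r′w + r² + 2rq − 2rp′ + p² + 2r′p on ℝ. Then ∫₀¹ h₂(x) dx = ∫₀¹ (p(x)² − γ(x)² − γ′(x)²) dx. -/
/-!
Eliminating `q` with the equation for `γ` turns the defining equation of `h₂` into the conservation
law `h₂ - (p² - γ² - γ′²) = (Φ - h₂)′` with `Φ = γ² + 2r(γ′ - γ + p)`. Since `Φ - h₂` is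
1-periodic, the integral of its derivative over a period vanishes.
-/

open MeasureTheory Function

theorem Function.Periodic.deriv {𝕜 F : Type*} [NontriviallyNormedField 𝕜] [NormedAddCommGroup F]
    [NormedSpace 𝕜 F] {f : 𝕜 → F} {c : 𝕜} (hf : Periodic f c) : Periodic (deriv f) c := fun x => by
  rw [← deriv_comp_add_const, show (fun y => f (y + c)) = f from funext hf]

theorem Function.Periodic.intervalIntegral_eq_zero_of_hasDerivAt {E : Type*}
    [NormedAddCommGroup E] [NormedSpace ℝ E] [CompleteSpace E] {F f : ℝ → E} {T : ℝ}
    (hF : Periodic F T) (hderiv : ∀ x, HasDerivAt F (f x) x)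
    (hint : IntervalIntegrable f volume 0 T) : ∫ x in (0)..T, f x = 0 := by
  rw [intervalIntegral.integral_eq_sub_of_hasDerivAt (fun x _ => hderiv x) hint,
    ← hF.eq, sub_self]

noncomputable def h2Potential (p r γ : ℝ → ℝ) (x : ℝ) : ℝ :=
  γ x ^ 2 + 2 * r x * (deriv γ x - γ x + p x)

theorem hasDerivAt_h2Potential_sub {p q r γ h w : ℝ → ℝ} {x : ℝ}
    (hp : DifferentiableAt ℝ p x) (hr : DifferentiableAt ℝ r x) (hγ : DifferentiableAt ℝ γ x)
    (hγ' : DifferentiableAt ℝ (deriv γ) x) (hh : DifferentiableAt ℝ h x)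
    (hγeq : deriv (deriv γ) x - γ x = (1/2) * (q x - r x) - deriv p x)
    (hw : w x = γ x - deriv γ x - r x)
    (hode : deriv h x + h x =
      2 * r x * (-(1/2) * (r x + q x) - deriv r x + deriv p x)
        - w x ^ 2 - 2 * deriv r x * w x
        + r x ^ 2 + 2 * r x * q x - 2 * r x * deriv p x + p x ^ 2
        + 2 * deriv r x * p x) :
    HasDerivAt (fun y => h2Potential p r γ y - h y)
      (h x - (p x ^ 2 - γ x ^ 2 - deriv γ x ^ 2)) x := by
  have hD := ((hγ.hasDerivAt.pow 2).add
    ((hr.hasDerivAt.const_mul 2).mul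
      ((hγ'.hasDerivAt.sub hγ.hasDerivAt).add hp.hasDerivAt))).sub hh.hasDerivAt
  refine hD.congr_deriv ?_
  rw [hw] at hode
  simp only [Pi.add_apply, Pi.sub_apply, Nat.cast_ofNat]
  linear_combination -hode + 2 * r x * hγeq

theorem integral_h2_eq_H2_general (p q r γ h₂ : ℝ → ℝ)
    (hp : ContDiff ℝ (⊤ : ℕ∞) p)
    (hr : ContDiff ℝ (⊤ : ℕ∞) r) (hγ : ContDiff ℝ (⊤ : ℕ∞) γ)
    (hh₂ : ContDiff ℝ (⊤ : ℕ∞) h₂)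
    (hpper : Function.Periodic p 1)
    (hrper : Function.Periodic r 1) (hγper : Function.Periodic γ 1)
    (hh₂per : Function.Periodic h₂ 1)
    (hγeq : ∀ x, deriv (deriv γ) x - γ x = (1/2) * (q x - r x) - deriv p x)
    (w : ℝ → ℝ) (hw : w = fun x => γ x - deriv γ x - r x)
    (hode : ∀ x, deriv h₂ x + h₂ x =
      2 * r x * (-(1/2) * (r x + q x) - deriv r x + deriv p x)
        - w x ^ 2 - 2 * deriv r x * w x
        + r x ^ 2 + 2 * r x * q x - 2 * r x * deriv p x + p x ^ 2
        + 2 * deriv r x * p x) :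
    (∫ x in (0:ℝ)..1, h₂ x) =
      ∫ x in (0:ℝ)..1, (p x ^ 2 - γ x ^ 2 - (deriv γ x) ^ 2) := by
  have hγ' : ContDiff ℝ (⊤ : ℕ∞) (deriv γ) := (contDiff_infty_iff_deriv.mp hγ).2
  have hderiv (x : ℝ) := hasDerivAt_h2Potential_sub (hp.differentiable (by simp) x)
    (hr.differentiable (by simp) x) (hγ.differentiable (by simp) x)
    (hγ'.differentiable (by simp) x) (hh₂.differentiable (by simp) x) (hγeq x)
    (congrFun hw x) (hode x)
  have hper : Periodic (fun y => h2Potential p r γ y - h₂ y) 1 := fun x => by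
    simp only [h2Potential, hpper x, hrper x, hγper x, hγper.deriv x, hh₂per x]
  have hH₂ : Continuous fun x => p x ^ 2 - γ x ^ 2 - deriv γ x ^ 2 := by
    have := hp.continuous; have := hγ.continuous; have := hγ'.continuous; fun_prop
  have hzero := hper.intervalIntegral_eq_zero_of_hasDerivAt hderiv
    ((hh₂.continuous.sub hH₂).intervalIntegrable 0 1)
  rwa [intervalIntegral.integral_sub (hh₂.continuous.intervalIntegrable 0 1)
    (hH₂.intervalIntegrable 0 1), sub_eq_zero] at hzero

theorem integral_h2_eq_H2 (p q r γ h₂ : ℝ → ℝ)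
    (hp : ContDiff ℝ (⊤ : ℕ∞) p) (hq : ContDiff ℝ (⊤ : ℕ∞) q)
    (hr : ContDiff ℝ (⊤ : ℕ∞) r) (hγ : ContDiff ℝ (⊤ : ℕ∞) γ)
    (hh₂ : ContDiff ℝ (⊤ : ℕ∞) h₂)
    (hpper : Function.Periodic p 1) (hqper : Function.Periodic q 1)
    (hrper : Function.Periodic r 1) (hγper : Function.Periodic γ 1)
    (hh₂per : Function.Periodic h₂ 1)
    (hγeq : ∀ x, deriv (deriv γ) x - γ x = (1/2) * (q x - r x) - deriv p x)
    (w : ℝ → ℝ) (hw : w = fun x => γ x - deriv γ x - r x)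
    (hode : ∀ x, deriv h₂ x + h₂ x =
      2 * r x * (-(1/2) * (r x + q x) - deriv r x + deriv p x)
        - w x ^ 2 - 2 * deriv r x * w x
        + r x ^ 2 + 2 * r x * q x - 2 * r x * deriv p x + p x ^ 2
        + 2 * deriv r x * p x) :
    (∫ x in (0:ℝ)..1, h₂ x) =
      ∫ x in (0:ℝ)..1, (p x ^ 2 - γ x ^ 2 - (deriv γ x) ^ 2) :=
  integral_h2_eq_H2_general p q r γ h₂ hp hr hγ hh₂ hpper hrper hγper hh₂per hγeq w hw hode
end
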